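/- arXiv:1012.5245 — 4 statements merged into one kernel-verified Lean document; each statement's English description precedes it below -/
import Mathlib

section
/- Let g be a Lie algebra, R : g → g a linear map satisfying the modified Yang–Baxter equation [R(X),R(Y)] - R([R(X),Y] + [X,R(Y)]) = -[X,Y] for all X,Y, and σ : g → g a linear map satisfying σ[X,Y] = [σX,Y] = [X,σY] for all X,Y and σ∘σ = id. Then R∘σ also satisfies the modified Yang–Baxter equation: [R(σX),R(σY)] - (R∘σ)([R(σX),Y] + [X,R(σY)]) = -[X,Y] for all X,Y. -/
/-- If `R` satisfies the modified Yang–Baxter equation (with α = -1) and `σ` is an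
intertwining involution, then `R ∘ σ` also satisfies the modified Yang–Baxter equation. -/
theorem mYB_comp_intertwining_involution
    {g : Type*} [LieRing g] [LieAlgebra ℂ g]
    (R σ : g →ₗ[ℂ] g)
    (hR : ∀ X Y : g, ⁅R X, R Y⁆ - R (⁅R X, Y⁆ + ⁅X, R Y⁆) = -⁅X, Y⁆)
    (hσ1 : ∀ X Y : g, σ ⁅X, Y⁆ = ⁅σ X, Y⁆)
    (hσ2 : ∀ X Y : g, σ ⁅X, Y⁆ = ⁅X, σ Y⁆)
    (hσσ : ∀ X : g, σ (σ X) = X) :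
    ∀ X Y : g, ⁅R (σ X), R (σ Y)⁆ - R (σ (⁅R (σ X), Y⁆ + ⁅X, R (σ Y)⁆)) = -⁅X, Y⁆ := by
  intro X Y
  have h := hR (σ X) (σ Y)
  have hs : σ (⁅R (σ X), Y⁆ + ⁅X, R (σ Y)⁆) = ⁅R (σ X), σ Y⁆ + ⁅σ X, R (σ Y)⁆ := by
    rw [map_add, hσ2, hσ1]
  have hb : ⁅σ X, σ Y⁆ = ⁅X, Y⁆ := by
    rw [← hσ1, ← hσ2, hσσ]
  rw [hs, h, hb]
end

section
/- Let g be a Lie algebra and R : g → g a linear map satisfying the modified Yang–Baxter equation [R(X),R(Y)] - R([R(X),Y]+[X,R(Y)]) = -[X,Y]. Then the bracket [X,Y]_R := [R(X),Y] + [X,R(Y)] satisfies the Jacobi identity, and hence (g, [·,·]_R) is a Lie algebra. -/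
/-- If `R` satisfies the modified Yang–Baxter equation, then the `R`-bracket
`[X,Y]_R = [R X, Y] + [X, R Y]` satisfies the Jacobi identity. -/
theorem rBracket_jacobi
    {g : Type*} [LieRing g] [LieAlgebra ℂ g]
    (R : g →ₗ[ℂ] g)
    (hR : ∀ X Y : g, ⁅R X, R Y⁆ - R (⁅R X, Y⁆ + ⁅X, R Y⁆) = -⁅X, Y⁆)
    (brR : g → g → g)
    (hbr : ∀ X Y : g, brR X Y = ⁅R X, Y⁆ + ⁅X, R Y⁆) :
    ∀ X Y Z : g, brR (brR X Y) Z + brR (brR Y Z) X + brR (brR Z X) Y = 0 := by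
  have hR' : ∀ X Y : g, R (⁅R X, Y⁆ + ⁅X, R Y⁆) = ⁅R X, R Y⁆ + ⁅X, Y⁆ := by
    intro X Y
    have h := hR X Y
    have e : R (⁅R X, Y⁆ + ⁅X, R Y⁆)
        = ⁅R X, R Y⁆ - (⁅R X, R Y⁆ - R (⁅R X, Y⁆ + ⁅X, R Y⁆)) := by abel
    rw [e, h]; abel
  have j : ∀ a b c : g, ⁅⁅a, b⁆, c⁆ + ⁅⁅b, c⁆, a⁆ + ⁅⁅c, a⁆, b⁆ = 0 := by
    intro a b c
    rw [← lie_skew ⁅a, b⁆ c, ← lie_skew ⁅b, c⁆ a, ← lie_skew ⁅c, a⁆ b]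
    simp only [← neg_add, neg_eq_zero]
    exact lie_jacobi c a b
  intro X Y Z
  simp only [hbr, hR', add_lie]
  calc _ = (⁅⁅R X, R Y⁆, Z⁆ + ⁅⁅R Y, Z⁆, R X⁆ + ⁅⁅Z, R X⁆, R Y⁆)
        + (⁅⁅R Y, R Z⁆, X⁆ + ⁅⁅R Z, X⁆, R Y⁆ + ⁅⁅X, R Y⁆, R Z⁆)
        + (⁅⁅R Z, R X⁆, Y⁆ + ⁅⁅R X, Y⁆, R Z⁆ + ⁅⁅Y, R Z⁆, R X⁆)
        + (⁅⁅X, Y⁆, Z⁆ + ⁅⁅Y, Z⁆, X⁆ + ⁅⁅Z, X⁆, Y⁆) := by abel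
    _ = 0 := by rw [j, j, j, j]; abel
end

section
/- Let a,b,c,d,e,f be complex numbers satisfying the system: a² = b² = d² = e² = 1; c(-a+b+f)=0; c(e-d-c)=0; c(d+e)=0; f(a-b-f)=0; f(d-e+c)=0; f(a+b)=0. Then (a,b,c,d,e,f) belongs to the explicit list: ±(1,-1,-2,1,-1,2), ±(1,-1,2,-1,1,2), ±(1,-1,0,1,1,2), ±(1,-1,0,-1,-1,2), ±(1,1,-2,1,-1,0), ±(1,1,2,-1,1,0), or (±1,±1,0,±1,±1,0) with independent signs, and conversely every tuple in this list satisfies the system. -/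
private lemma sq1 {x : ℂ} (h : x ^ 2 = 1) : x = 1 ∨ x = -1 := by
  have h' : (x - 1) * (x + 1) = 0 := by linear_combination h
  rcases mul_eq_zero.1 h' with h'' | h''
  · exact Or.inl (sub_eq_zero.1 h'')
  · exact Or.inr (eq_neg_of_add_eq_zero_left h'')

/-- Classification of the coefficient tuples `(a,b,c,d,e,f) ∈ ℂ⁶` solving the system
arising from the modified Yang–Baxter equation on the coupled Lie algebra. -/
theorem coefficient_system_classification (a b c d e f : ℂ) :
    (a ^ 2 = 1 ∧ b ^ 2 = 1 ∧ d ^ 2 = 1 ∧ e ^ 2 = 1 ∧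
     c * (-a + b + f) = 0 ∧ c * (e - d - c) = 0 ∧ c * (d + e) = 0 ∧
     f * (a - b - f) = 0 ∧ f * (d - e + c) = 0 ∧ f * (a + b) = 0) ↔
    ((a, b, c, d, e, f) = (1, -1, -2, 1, -1, 2) ∨
     (a, b, c, d, e, f) = (-1, 1, 2, -1, 1, -2) ∨
     (a, b, c, d, e, f) = (1, -1, 2, -1, 1, 2) ∨
     (a, b, c, d, e, f) = (-1, 1, -2, 1, -1, -2) ∨
     (a, b, c, d, e, f) = (1, -1, 0, 1, 1, 2) ∨
     (a, b, c, d, e, f) = (-1, 1, 0, -1, -1, -2) ∨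
     (a, b, c, d, e, f) = (1, -1, 0, -1, -1, 2) ∨
     (a, b, c, d, e, f) = (-1, 1, 0, 1, 1, -2) ∨
     (a, b, c, d, e, f) = (1, 1, -2, 1, -1, 0) ∨
     (a, b, c, d, e, f) = (-1, -1, 2, -1, 1, 0) ∨
     (a, b, c, d, e, f) = (1, 1, 2, -1, 1, 0) ∨
     (a, b, c, d, e, f) = (-1, -1, -2, 1, -1, 0) ∨
     ((a = 1 ∨ a = -1) ∧ (b = 1 ∨ b = -1) ∧ c = 0 ∧
      (d = 1 ∨ d = -1) ∧ (e = 1 ∨ e = -1) ∧ f = 0)) := by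
  constructor
  · rintro ⟨ha, hb, hd, he, h1, h2, h3, h4, h5, h6⟩
    rcases sq1 ha with rfl | rfl <;> rcases sq1 hb with rfl | rfl <;>
      rcases sq1 hd with rfl | rfl <;> rcases sq1 he with rfl | rfl <;>
      simp only [Prod.mk.injEq, mul_eq_zero] at * <;>
      rcases h3 with rfl | h3 <;> rcases h6 with rfl | h6 <;>
      norm_num [sub_eq_zero, add_eq_zero_iff_eq_neg] at * <;> (try simp_all) <;>
      casesm* _ ∨ _ <;> subst_vars <;> norm_num at *
  · rintro (h | h | h | h | h | h | h | h | h | h | h | h |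
      ⟨(rfl | rfl), (rfl | rfl), rfl, (rfl | rfl), (rfl | rfl), rfl⟩) <;>
      first
        | (simp only [Prod.mk.injEq] at h
           obtain ⟨rfl, rfl, rfl, rfl, rfl, rfl⟩ := h
           norm_num)
        | norm_num
end

section
/- Let D be a derivation on a commutative ring 𝒜 and consider the ring of pseudo-differential operators with product defined by fDⁱ · gDʲ = Σ_{r≥0} C(i,r) f D^r(g) D^{i+j-r}. Then for operators A with finitely many nonzero terms, the residue of a commutator is a total derivative: res[A,B] ∈ D(𝒜), i.e., there exists h ∈ 𝒜 with res(AB - BA) = D(h). -/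
/-- Generalized binomial coefficient `binom i r = i(i-1)⋯(i-r+1)/r!` for `i : ℤ`. -/
noncomputable def genBinom (i : ℤ) (r : ℕ) : ℂ :=
  (∏ k ∈ Finset.range r, ((i : ℂ) - (k : ℂ))) / (r.factorial : ℂ)

/-- A pseudo-differential operator `A = Σᵢ fᵢ Dⁱ` with finitely many nonzero terms is
encoded as `f : ℤ →₀ 𝒜`.  With the product `fDⁱ · gDʲ = Σ_{r≥0} C(i,r) f D^r(g) D^{i+j-r}`,
the residue (coefficient of `D⁻¹`) of the product of two such operators is the finite sum
`res(AB) = Σᵢⱼ C(i, i+j+1) fᵢ D^{i+j+1}(gⱼ)` (the term is present iff `i + j + 1 ≥ 0`). -/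
noncomputable def pdoResMul {𝒜 : Type*} [CommRing 𝒜] [Algebra ℂ 𝒜]
    (D : Derivation ℂ 𝒜 𝒜) (f g : ℤ →₀ 𝒜) : 𝒜 :=
  ∑ i ∈ f.support, ∑ j ∈ g.support,
    if 0 ≤ i + j + 1 then
      genBinom i (i + j + 1).toNat • (f i * (⇑D)^[(i + j + 1).toNat] (g j))
    else 0


private lemma key_ident {𝒜 : Type*} [CommRing 𝒜] [Algebra ℂ 𝒜]
    (D : Derivation ℂ 𝒜 𝒜) (n : ℕ) (a b : 𝒜) :
    a * (⇑D)^[n] b - (-1 : ℂ)^n • (b * (⇑D)^[n] a)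
      = D (∑ s ∈ Finset.range n, (-1 : ℂ)^s • ((⇑D)^[s] a * (⇑D)^[n-1-s] b)) := by
  induction n generalizing b with
  | zero => simp [mul_comm]
  | succ n ih =>
    rw [Finset.sum_range_succ, map_add]
    have h1 : ∑ s ∈ Finset.range n, (-1:ℂ)^s • ((⇑D)^[s] a * (⇑D)^[n+1-1-s] b)
        = ∑ s ∈ Finset.range n, (-1:ℂ)^s • ((⇑D)^[s] a * (⇑D)^[n-1-s] (D b)) := by
      apply Finset.sum_congr rfl
      intro s hs
      have hlt := Finset.mem_range.mp hs
      have h2 : n + 1 - 1 - s = (n - 1 - s) + 1 := by omega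
      rw [h2, Function.iterate_succ_apply]
    rw [h1, ← ih (D b), D.map_smul, Derivation.leibniz]
    have h3 : n + 1 - 1 - n = 0 := by omega
    rw [h3, Function.iterate_succ_apply, Function.iterate_succ_apply']
    simp only [Function.iterate_zero_apply, smul_eq_mul, pow_succ]
    rw [mul_comm (D b) ((⇑D)^[n] a)]
    module

private lemma genBinom_reflect (i j : ℤ) (h : 0 ≤ i + j + 1) :
    genBinom j (i + j + 1).toNat = (-1 : ℂ) ^ (i + j + 1).toNat * genBinom i (i + j + 1).toNat := by
  set n := (i + j + 1).toNat with hn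
  have hij : i + j + 1 = (n : ℤ) := (Int.toNat_of_nonneg h).symm
  have key : ∏ k ∈ Finset.range n, ((j : ℂ) - (k : ℂ))
      = (-1 : ℂ) ^ n * ∏ k ∈ Finset.range n, ((i : ℂ) - (k : ℂ)) := by
    have h2 : ∀ k ∈ Finset.range n, ((j : ℂ) - (k : ℂ)) = (-1) * (((i:ℂ)) - ((n - 1 - k : ℕ) : ℂ)) := by
      intro k hk
      have hlt := Finset.mem_range.mp hk
      have hj : (j : ℂ) = (n : ℂ) - 1 - (i : ℂ) := by
        have : (j : ℤ) = (n : ℤ) - 1 - i := by omega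
        rw [this]; push_cast; ring
      have hc : ((n - 1 - k : ℕ) : ℂ) = (n : ℂ) - 1 - (k : ℂ) := by
        rw [Nat.sub_sub, Nat.cast_sub (by omega : 1 + k ≤ n)]
        push_cast; ring
      rw [hj, hc]; ring
    rw [Finset.prod_congr rfl h2, Finset.prod_mul_distrib, Finset.prod_const, Finset.card_range,
      Finset.prod_range_reflect (fun k => ((i:ℂ) - (k:ℂ))) n]
  unfold genBinom
  rw [key]; ring

/-- The residue of a commutator of pseudo-differential operators is a total derivative:
`res[A,B] = res(AB - BA) ∈ D(𝒜)`. -/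
theorem pdo_res_commutator_total_derivative
    {𝒜 : Type*} [CommRing 𝒜] [Algebra ℂ 𝒜]
    (D : Derivation ℂ 𝒜 𝒜) (f g : ℤ →₀ 𝒜) :
    ∃ h : 𝒜, pdoResMul D f g - pdoResMul D g f = D h := by
  classical
  refine ⟨∑ i ∈ f.support, ∑ j ∈ g.support,
    if 0 ≤ i + j + 1 then
      genBinom i (i + j + 1).toNat • (∑ s ∈ Finset.range (i + j + 1).toNat,
        (-1:ℂ)^s • ((⇑D)^[s] (f i) * (⇑D)^[(i + j + 1).toNat - 1 - s] (g j)))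
    else 0, ?_⟩
  have hswap : pdoResMul D g f = ∑ i ∈ f.support, ∑ j ∈ g.support,
      if 0 ≤ i + j + 1 then
        genBinom j (i + j + 1).toNat • (g j * (⇑D)^[(i + j + 1).toNat] (f i))
      else 0 := by
    rw [pdoResMul, Finset.sum_comm]
    refine Finset.sum_congr rfl fun i _ => Finset.sum_congr rfl fun j _ => ?_
    rw [show j + i + 1 = i + j + 1 from by ring]
  rw [hswap, pdoResMul, map_sum, ← Finset.sum_sub_distrib]
  refine Finset.sum_congr rfl fun i _ => ?_
  rw [map_sum, ← Finset.sum_sub_distrib]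
  refine Finset.sum_congr rfl fun j _ => ?_
  by_cases hc : 0 ≤ i + j + 1
  · simp only [if_pos hc]
    rw [D.map_smul, ← key_ident, genBinom_reflect i j hc, smul_sub, smul_smul,
      mul_comm ((-1:ℂ) ^ (i + j + 1).toNat) (genBinom i (i + j + 1).toNat), ← smul_smul]
  · simp [if_neg hc]
end
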